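/- Let Ψ : ℝ^d → ℝ be convex and L-smooth with minimizer w*, and suppose the gradient-descent-with-error iterates satisfy w^{(t+1)} = w^{(t)} − η(∇Ψ(w^{(t)}) + Λ^{(t)}) with ‖Λ^{(t)}‖ ≤ ε for all t, step size η ≤ 1/L, and all iterates lie in a ball of radius R around w*. Then the averaged iterate w̄ = (1/T) Σ_{t=1}^T w^{(t)} satisfies Ψ(w̄) − Ψ(w*) ≤ ‖w^{(0)} − w*‖²/(2ηT) + R ε. -/

import Mathlib

/-!
Convexity gives the first-order lower bound `f x + ⟪∇f x, z - x⟫ ≤ f z` and `L`-smoothness the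
descent inequality `f y ≤ f x + ⟪∇f x, y - x⟫ + L/2 ‖y - x‖²`. For a step
`y = x - η (∇f x + e)` the gradient is `η⁻¹ (x - y) - e`, and the three-point identity turns
`η⁻¹ ⟪x - y, y - z⟫` into a telescoping difference of squared distances to `z` minus
`‖x - y‖² / (2η)`, which absorbs the smoothness term since `L ≤ η⁻¹`. Each step therefore costs
at most the telescoping term plus the error `⟪e, z - y⟫ ≤ Rε`; summing over `T` steps and applying
Jensen's inequality to the averaged iterate gives the bound.
-/

open Finset

theorem two_mul_inner_sub_sub_eq {F : Type*} [NormedAddCommGroup F] [InnerProductSpace ℝ F]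
    (x y z : F) :
    2 * inner ℝ (x - y) (y - z) = ‖x - z‖ ^ 2 - ‖y - z‖ ^ 2 - ‖x - y‖ ^ 2 := by
  have h := norm_add_sq_real (x - y) (y - z)
  rw [sub_add_sub_cancel] at h
  linarith

section GradientStep

variable {E : Type*} [NormedAddCommGroup E] [InnerProductSpace ℝ E] [CompleteSpace E]
  {f : E → ℝ}

theorem HasGradientAt.hasDerivAt_comp_add_smul {f' x v : E} {t : ℝ}
    (hf : HasGradientAt f f' (x + t • v)) :
    HasDerivAt (fun s : ℝ => f (x + s • v)) (inner ℝ f' v) t := by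
  have hline : HasDerivAt (fun s : ℝ => x + s • v) v t := by
    simpa using ((hasDerivAt_id t).smul_const v).const_add x
  exact (hasGradientAt_iff_hasFDerivAt.mp hf).comp_hasDerivAt t hline

theorem ConvexOn.add_inner_gradient_le (hconv : ConvexOn ℝ Set.univ f) {f' x : E}
    (hf : HasGradientAt f f' x) (y : E) :
    f x + inner ℝ f' (y - x) ≤ f y := by
  set g : ℝ → ℝ := fun s => f (x + s • (y - x))
  have hg : ConvexOn ℝ Set.univ g := by
    have hline : f ∘ AffineMap.lineMap x y = g := by
      funext s
      simp [g, AffineMap.lineMap_apply, add_comm]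
    simpa [hline] using hconv.comp_affineMap (AffineMap.lineMap x y)
  have hderiv : HasDerivAt g (inner ℝ f' (y - x)) 0 :=
    HasGradientAt.hasDerivAt_comp_add_smul (by simpa using hf)
  have := hg.le_slope_of_hasDerivAt (Set.mem_univ 0) (Set.mem_univ 1) one_pos hderiv
  simp only [slope_def_field, g, zero_smul, add_zero, one_smul, add_sub_cancel, sub_zero,
    div_one] at this
  linarith

theorem le_add_inner_gradient_add_sq (hf : Differentiable ℝ f) {L : ℝ}
    (hsm : ∀ x y, ‖gradient f x - gradient f y‖ ≤ L * ‖x - y‖) (x y : E) :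
    f y ≤ f x + inner ℝ (gradient f x) (y - x) + L / 2 * ‖y - x‖ ^ 2 := by
  set v := y - x
  set φ : ℝ → ℝ :=
    fun s => f (x + s • v) - s * inner ℝ (gradient f x) v - L / 2 * ‖v‖ ^ 2 * s ^ 2
  have hφ : ∀ s, HasDerivAt φ (inner ℝ (gradient f (x + s • v)) v - inner ℝ (gradient f x) v
      - L / 2 * ‖v‖ ^ 2 * (2 * s)) s :=
    fun s => ((hf _).hasGradientAt.hasDerivAt_comp_add_smul.sub
      ((hasDerivAt_id s).mul_const _ |>.congr_deriv (one_mul _))).sub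
      (((hasDerivAt_pow 2 s).const_mul _).congr_deriv (by ring))
  have hanti : AntitoneOn φ (Set.Icc 0 1) := by
    refine antitoneOn_of_hasDerivWithinAt_nonpos (convex_Icc 0 1)
      (fun s _ => (hφ s).continuousAt.continuousWithinAt) (fun s _ => (hφ s).hasDerivWithinAt) ?_
    intro s hs
    rw [interior_Icc] at hs
    have hinc :
        inner ℝ (gradient f (x + s • v)) v - inner ℝ (gradient f x) v ≤ L * s * ‖v‖ ^ 2 :=
      calc inner ℝ (gradient f (x + s • v)) v - inner ℝ (gradient f x) v
          = inner ℝ (gradient f (x + s • v) - gradient f x) v := (inner_sub_left ..).symm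
        _ ≤ ‖gradient f (x + s • v) - gradient f x‖ * ‖v‖ := real_inner_le_norm ..
        _ ≤ L * ‖s • v‖ * ‖v‖ := by gcongr; simpa using hsm (x + s • v) x
        _ = L * s * ‖v‖ ^ 2 := by rw [norm_smul, Real.norm_of_nonneg hs.1.le]; ring
    linarith
  have := hanti (by simp) (by simp) zero_le_one
  simp only [φ, zero_smul, add_zero, zero_mul, sub_zero, one_smul, one_mul, one_pow, v,
    add_sub_cancel] at this
  linarith

theorem ConvexOn.sub_le_of_inexact_gradient_step (hconv : ConvexOn ℝ Set.univ f)
    (hf : Differentiable ℝ f) {L η : ℝ} (hη : 0 < η) (hLη : L ≤ η⁻¹)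
    (hsm : ∀ x y, ‖gradient f x - gradient f y‖ ≤ L * ‖x - y‖) {x y e : E}
    (hy : y = x - η • (gradient f x + e)) (z : E) :
    f y - f z ≤ (‖x - z‖ ^ 2 - ‖y - z‖ ^ 2) / (2 * η) + inner ℝ e (z - y) := by
  have hgrad : gradient f x = η⁻¹ • (x - y) - e := by
    rw [hy, sub_sub_cancel, smul_smul, inv_mul_cancel₀ hη.ne', one_smul, add_sub_cancel_right]
  have hdescent := le_add_inner_gradient_add_sq hf hsm x y
  have hfirst := hconv.add_inner_gradient_le (hf x).hasGradientAt z
  have hinner : inner ℝ (gradient f x) (y - x) - inner ℝ (gradient f x) (z - x)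
      = η⁻¹ * inner ℝ (x - y) (y - z) + inner ℝ e (z - y) := by
    rw [← inner_sub_right, sub_sub_sub_cancel_right, hgrad, inner_sub_left, real_inner_smul_left,
      ← neg_sub y z, inner_neg_right]
    ring
  have hthree : η⁻¹ * inner ℝ (x - y) (y - z)
      = η⁻¹ / 2 * (‖x - z‖ ^ 2 - ‖y - z‖ ^ 2 - ‖x - y‖ ^ 2) := by
    rw [← two_mul_inner_sub_sub_eq]; ring
  have hsq : L / 2 * ‖y - x‖ ^ 2 ≤ η⁻¹ / 2 * ‖x - y‖ ^ 2 := by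
    rw [norm_sub_rev]; gcongr
  rw [div_eq_mul_inv, mul_inv, mul_comm]
  linarith

end GradientStep

theorem sum_range_le_of_le_sub_succ {a D : ℕ → ℝ} {c δ : ℝ} (hc : 0 < c) (hD : ∀ t, 0 ≤ D t)
    (h : ∀ t, a t ≤ (D t - D (t + 1)) / c + δ) (T : ℕ) :
    ∑ t ∈ range T, a t ≤ D 0 / c + T * δ := by
  calc ∑ t ∈ range T, a t ≤ ∑ t ∈ range T, ((D t - D (t + 1)) / c + δ) :=
      sum_le_sum fun t _ => h t
    _ = (D 0 - D T) / c + T * δ := by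
      rw [sum_add_distrib, ← sum_div, sum_range_sub', sum_const, card_range, nsmul_eq_mul]
    _ ≤ D 0 / c + T * δ := by gcongr; linarith [hD T]

theorem ConvexOn.map_inv_card_smul_sum_le {E ι : Type*} [AddCommGroup E] [Module ℝ E]
    {f : E → ℝ} {C : Set E} (hf : ConvexOn ℝ C f) {s : Finset ι} (hs : s.Nonempty) {p : ι → E}
    (hp : ∀ i ∈ s, p i ∈ C) :
    f ((#s : ℝ)⁻¹ • ∑ i ∈ s, p i) ≤ (#s : ℝ)⁻¹ * ∑ i ∈ s, f (p i) := by
  have := hf.map_centerMass_le (t := s) (w := fun _ => 1) (fun _ _ => zero_le_one)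
    (by simpa using hs) hp
  simpa [centerMass] using this

theorem ConvexOn.map_average_range_sub_le {E : Type*} [AddCommGroup E] [Module ℝ E] {f : E → ℝ}
    (hf : ConvexOn ℝ Set.univ f) (u : ℕ → E) {T : ℕ} (hT : 0 < T) {m B : ℝ}
    (h : ∑ t ∈ range T, (f (u t) - m) ≤ B) :
    f ((T : ℝ)⁻¹ • ∑ t ∈ range T, u t) - m ≤ B / T := by
  have hjensen := hf.map_inv_card_smul_sum_le (nonempty_range_iff.mpr hT.ne')
    (fun t _ => Set.mem_univ (u t))
  rw [card_range] at hjensen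
  rw [sum_sub_distrib, sum_const, card_range, nsmul_eq_mul] at h
  have hTpos : (0 : ℝ) < T := by exact_mod_cast hT
  calc f ((T : ℝ)⁻¹ • ∑ t ∈ range T, u t) - m
      ≤ (T : ℝ)⁻¹ * (∑ t ∈ range T, f (u t) - T * m) := by
        rw [mul_sub, inv_mul_cancel_left₀ hTpos.ne']
        linarith
    _ ≤ B / T := by
      rw [inv_mul_eq_div]
      gcongr

theorem inexact_gd_convex_convergence_general {d : ℕ}
    (Ψ : EuclideanSpace ℝ (Fin d) → ℝ) (L η ε R : ℝ)
    (hη0 : 0 < η) (hηL : η ≤ 1 / L)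
    (hconv : ConvexOn ℝ Set.univ Ψ) (hdiff : Differentiable ℝ Ψ)
    (hsm : ∀ x y, ‖gradient Ψ x - gradient Ψ y‖ ≤ L * ‖x - y‖)
    (wstar : EuclideanSpace ℝ (Fin d))
    (w Λ : ℕ → EuclideanSpace ℝ (Fin d))
    (hupd : ∀ t, w (t + 1) = w t - η • (gradient Ψ (w t) + Λ t))
    (herr : ∀ t, ‖Λ t‖ ≤ ε)
    (hR : ∀ t, ‖w t - wstar‖ ≤ R)
    (T : ℕ) (hT : 0 < T) :
    Ψ ((T : ℝ)⁻¹ • ∑ t ∈ Finset.Icc 1 T, w t) - Ψ wstar ≤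
      ‖w 0 - wstar‖ ^ 2 / (2 * η * T) + R * ε := by
  have hLη : L ≤ η⁻¹ := by
    rcases le_or_gt L 0 with hL | hL
    · exact hL.trans (inv_pos.mpr hη0).le
    · exact le_inv_of_le_inv₀ hη0 (by simpa using hηL)
  have hstep (t : ℕ) : Ψ (w (t + 1)) - Ψ wstar
      ≤ (‖w t - wstar‖ ^ 2 - ‖w (t + 1) - wstar‖ ^ 2) / (2 * η) + R * ε := by
    have herror : inner ℝ (Λ t) (wstar - w (t + 1)) ≤ R * ε :=
      calc inner ℝ (Λ t) (wstar - w (t + 1)) ≤ ‖Λ t‖ * ‖wstar - w (t + 1)‖ :=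
            real_inner_le_norm ..
        _ ≤ ε * R := by
          rw [norm_sub_rev]
          exact mul_le_mul (herr t) (hR _) (norm_nonneg _) ((norm_nonneg _).trans (herr t))
        _ = R * ε := mul_comm ..
    linarith [hconv.sub_le_of_inexact_gradient_step hdiff hη0 hLη hsm (hupd t) wstar]
  have hsum := sum_range_le_of_le_sub_succ (by positivity) (fun t => by positivity) hstep T
  have hIcc : ∑ t ∈ Icc 1 T, w t = ∑ t ∈ range T, w (t + 1) := by
    rw [range_eq_Ico, sum_Ico_add', Ico_add_one_right_eq_Icc]
  rw [hIcc]
  refine (hconv.map_average_range_sub_le (fun t => w (t + 1)) hT hsum).trans_eq ?_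
  field_simp

/-- Inexact gradient descent on a convex L-smooth function: the averaged iterate satisfies
Ψ(w̄) − Ψ(w*) ≤ ‖w₀ − w*‖²/(2ηT) + Rε. -/
theorem inexact_gd_convex_convergence {d : ℕ}
    (Ψ : EuclideanSpace ℝ (Fin d) → ℝ) (L η ε R : ℝ)
    (hL : 0 < L) (hη0 : 0 < η) (hηL : η ≤ 1 / L)
    (hconv : ConvexOn ℝ Set.univ Ψ) (hdiff : Differentiable ℝ Ψ)
    (hsm : ∀ x y, ‖gradient Ψ x - gradient Ψ y‖ ≤ L * ‖x - y‖)
    (wstar : EuclideanSpace ℝ (Fin d)) (hmin : ∀ w, Ψ wstar ≤ Ψ w)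
    (w Λ : ℕ → EuclideanSpace ℝ (Fin d))
    (hupd : ∀ t, w (t + 1) = w t - η • (gradient Ψ (w t) + Λ t))
    (herr : ∀ t, ‖Λ t‖ ≤ ε)
    (hR : ∀ t, ‖w t - wstar‖ ≤ R)
    (T : ℕ) (hT : 0 < T) :
    Ψ ((T : ℝ)⁻¹ • ∑ t ∈ Finset.Icc 1 T, w t) - Ψ wstar ≤
      ‖w 0 - wstar‖ ^ 2 / (2 * η * T) + R * ε :=
  inexact_gd_convex_convergence_general Ψ L η ε R hη0 hηL hconv hdiff hsm wstar w Λ hupd herr hR T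
    hT
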